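/- arXiv:2106.03555 — 6 statements merged into one kernel-verified Lean document; each statement's English description precedes it below -/
import Mathlib

section
/- Let G be a d-claw free graph (d ≥ 2), i.e., no vertex has an independent set of d vertices in its neighborhood. Let A* be an independent set and A a maximal independent set in G, with positive weights w. Then ∑_{u ∈ A*} w(N(u,A))/2 ≤ ((d−1)/2) · w(A), where N(u,A) := {a ∈ A : {u,a} ∈ E or u = a}. -/
theorem neighborhood_weight_bound {V : Type*} [Fintype V] [DecidableEq V]
    (G : SimpleGraph V) [DecidableRel G.Adj] (d : ℕ) (hd : 2 ≤ d)
    (w : V → ℝ) (hw : ∀ v, 0 < w v)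
    (hclaw : ∀ v : V, ∀ S : Finset V, (∀ x ∈ S, G.Adj v x) →
      (∀ x ∈ S, ∀ y ∈ S, x ≠ y → ¬ G.Adj x y) → S.card < d)
    (Astar A : Finset V)
    (hAstar : ∀ x ∈ Astar, ∀ y ∈ Astar, ¬ G.Adj x y)
    (hAindep : ∀ x ∈ A, ∀ y ∈ A, ¬ G.Adj x y)
    (hAmax : ∀ v, v ∉ A → ∃ a ∈ A, G.Adj v a) :
    ∑ u ∈ Astar, (∑ a ∈ A.filter (fun a => G.Adj u a ∨ u = a), w a) / 2 ≤
      ((d : ℝ) - 1) / 2 * ∑ a ∈ A, w a := by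
  have key : ∀ a ∈ A, ((Astar.filter (fun u => G.Adj u a ∨ u = a)).card : ℝ) ≤ (d : ℝ) - 1 := by
    intro a _
    have hcard : (Astar.filter (fun u => G.Adj u a ∨ u = a)).card ≤ d - 1 := by
      by_cases ha : a ∈ Astar
      · have : Astar.filter (fun u => G.Adj u a ∨ u = a) ⊆ {a} := by
          intro u hu
          simp only [Finset.mem_filter] at hu
          rcases hu.2 with h | h
          · exact absurd h (hAstar u hu.1 a ha)
          · simp [h]
        calc (Astar.filter (fun u => G.Adj u a ∨ u = a)).card ≤ 1 :=
              le_trans (Finset.card_le_card this) (by simp)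
          _ ≤ d - 1 := by omega
      · have hsub : Astar.filter (fun u => G.Adj u a ∨ u = a)
            = Astar.filter (fun u => G.Adj a u) := by
          apply Finset.filter_congr
          intro u hu
          constructor
          · rintro (h | rfl)
            · exact h.symm
            · exact absurd hu ha
          · intro h; exact Or.inl h.symm
        rw [hsub]
        have := hclaw a (Astar.filter (fun u => G.Adj a u))
          (fun x hx => (Finset.mem_filter.mp hx).2)
          (fun x hx y hy hxy => hAstar x (Finset.mem_filter.mp hx).1 y (Finset.mem_filter.mp hy).1)
        omega
    calc ((Astar.filter (fun u => G.Adj u a ∨ u = a)).card : ℝ) ≤ ((d - 1 : ℕ) : ℝ) := by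
          exact_mod_cast hcard
      _ ≤ (d : ℝ) - 1 := by
          have : ((d - 1 : ℕ) : ℝ) = (d : ℝ) - 1 := by
            have : 1 ≤ d := by omega
            push_cast [this]; ring
          simp [this]
  have swap : ∑ u ∈ Astar, ∑ a ∈ A.filter (fun a => G.Adj u a ∨ u = a), w a
      = ∑ a ∈ A, ((Astar.filter (fun u => G.Adj u a ∨ u = a)).card : ℝ) * w a := by
    simp_rw [Finset.sum_filter]
    rw [Finset.sum_comm]
    apply Finset.sum_congr rfl
    intro a _
    rw [← Finset.sum_filter, Finset.sum_const, nsmul_eq_mul]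
  have step : ∑ u ∈ Astar, (∑ a ∈ A.filter (fun a => G.Adj u a ∨ u = a), w a) / 2
      = (∑ a ∈ A, ((Astar.filter (fun u => G.Adj u a ∨ u = a)).card : ℝ) * w a) / 2 := by
    rw [← swap, ← Finset.sum_div]
  rw [step, div_mul_eq_mul_div, div_le_div_iff_of_pos_right (by norm_num : (0:ℝ) < 2)]
  rw [Finset.mul_sum]
  apply Finset.sum_le_sum
  intro a ha
  exact mul_le_mul_of_nonneg_right (key a ha) (hw a).le
end

section
/- Let u be a vertex with positive weights, A a finite set of vertices with N(u,A) ⊆ A finite and nonempty, and v ∈ N(u,A) of maximum weight. Define charge(u,v) := w(u) − w(N(u,A))/2, where w(S) := ∑_{x∈S} w(x). Then w(u)² − ∑_{x ∈ N(u,A)\{v}} w(x)² ≥ 2 · charge(u,v) · w(v). -/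
theorem charge_contribution_bound {V : Type*} [DecidableEq V]
    (w : V → ℝ) (hw : ∀ v, 0 < w v) (u v : V) (N : Finset V)
    (hvN : v ∈ N) (hmax : ∀ x ∈ N, w x ≤ w v) :
    2 * (w u - (∑ x ∈ N, w x) / 2) * w v ≤
      (w u)^2 - ∑ x ∈ N.erase v, (w x)^2 := by
  have hS : ∑ x ∈ N, w x = w v + ∑ x ∈ N.erase v, w x :=
    (Finset.add_sum_erase N w hvN).symm
  have h1 : ∑ x ∈ N.erase v, (w x)^2 ≤ ∑ x ∈ N.erase v, w x * w v := by
    apply Finset.sum_le_sum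
    intro i hi
    have := hmax i (Finset.mem_of_mem_erase hi)
    nlinarith [(hw i).le]
  rw [hS]
  have h2 : ∑ x ∈ N.erase v, w x * w v = (∑ x ∈ N.erase v, w x) * w v :=
    (Finset.sum_mul ..).symm
  nlinarith [sq_nonneg (w u - w v)]
end

section
/- Let w(u), w(v) > 0 be reals with w(v) ≥ w(x) for all x in a finite multiset N containing v, let γ ∈ (0,1), and suppose w(u)² − ∑_{x ∈ N\{v}} w(x)² − (2w(u) − w(N))·w(v) < γ·w(v)². Then (w(u) − w(v))² + (w(N) − w(v))·(w(v) − max{0, max_{y ∈ N\{v}} w(y)}) < γ·w(v)², and consequently both (w(u)−w(v))² ≤ γ·w(v)² and (w(N)−w(v))·(w(v) − max{0, max_{y∈N\{v}} w(y)}) ≤ γ·w(v)². -/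
theorem single_double_classification_calc {V : Type*} [DecidableEq V]
    (w : V → ℝ) (hw : ∀ v, 0 < w v) (u v : V) (N : Finset V)
    (hvN : v ∈ N) (hmax : ∀ x ∈ N, w x ≤ w v)
    (γ : ℝ) (hγ0 : 0 < γ) (hγ1 : γ < 1)
    (h : (w u)^2 - (∑ x ∈ N.erase v, (w x)^2) - (2 * w u - ∑ x ∈ N, w x) * w v
          < γ * (w v)^2) :
    (w u - w v)^2 + ((∑ x ∈ N, w x) - w v) * (w v - (N.erase v).fold max 0 w)
        < γ * (w v)^2 ∧
    (w u - w v)^2 ≤ γ * (w v)^2 ∧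
    ((∑ x ∈ N, w x) - w v) * (w v - (N.erase v).fold max 0 w) ≤ γ * (w v)^2 := by
  set M : ℝ := (N.erase v).fold max 0 w with hMdef
  have hsum : (∑ x ∈ N.erase v, w x) + w v = ∑ x ∈ N, w x :=
    Finset.sum_erase_add N w hvN
  have hMle : M ≤ w v := by
    rw [hMdef, Finset.fold_max_le]
    exact ⟨(hw v).le, fun x hx => hmax x (Finset.mem_of_mem_erase hx)⟩
  have hxM : ∀ x ∈ N.erase v, w x ≤ M := by
    intro x hx
    exact (Finset.le_fold_max _).mpr (Or.inr ⟨x, hx, le_rfl⟩)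
  have hsumnn : 0 ≤ ∑ x ∈ N.erase v, w x :=
    Finset.sum_nonneg fun x _ => (hw x).le
  -- rewrite h
  have h1 : (w u - w v)^2 + ∑ x ∈ N.erase v, w x * (w v - w x) < γ * (w v)^2 := by
    have e : (w u - w v)^2 + ∑ x ∈ N.erase v, w x * (w v - w x)
        = (w u)^2 - (∑ x ∈ N.erase v, (w x)^2)
          - (2 * w u - ((∑ x ∈ N.erase v, w x) + w v)) * w v := by
      have : ∑ x ∈ N.erase v, w x * (w v - w x)
          = (∑ x ∈ N.erase v, w x) * w v - ∑ x ∈ N.erase v, (w x)^2 := by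
        rw [Finset.sum_mul]
        rw [← Finset.sum_sub_distrib]
        exact Finset.sum_congr rfl fun x _ => by ring
      rw [this]; ring
    rw [e, hsum]; exact h
  have h2 : ((∑ x ∈ N, w x) - w v) * (w v - M)
      ≤ ∑ x ∈ N.erase v, w x * (w v - w x) := by
    rw [← hsum, add_sub_cancel_right, Finset.sum_mul]
    apply Finset.sum_le_sum
    intro x hx
    exact mul_le_mul_of_nonneg_left (by linarith [hxM x hx]) (hw x).le
  have key : (w u - w v)^2 + ((∑ x ∈ N, w x) - w v) * (w v - M) < γ * (w v)^2 := by
    linarith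
  have hA : 0 ≤ (w u - w v)^2 := sq_nonneg _
  have hB : 0 ≤ ((∑ x ∈ N, w x) - w v) * (w v - M) := by
    apply mul_nonneg
    · linarith [hsum]
    · linarith
  exact ⟨key, by linarith, by linarith⟩
end

section
/- Let 0 < γ ≤ √2 − 1 satisfy 2 + γ − 1/(1 − √(2γ)) ≥ √(2γ). Let u, v₁, v₂ be positive reals with min{u,v₁} > (1−√(2γ))·max{u,v₁}, v₂ ≤ (1 − √(2γ))·v₁, and v₁ ≤ (2+γ)·u. Then (v₁ − v₂)·((2+γ)·u − v₁) ≥ 2γ·u·v₁. -/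
theorem good_vertex_second_neighbor_calc (γ u v₁ v₂ : ℝ)
    (hγ0 : 0 < γ) (hγ1 : γ ≤ Real.sqrt 2 - 1)
    (hcond : Real.sqrt (2 * γ) ≤ 2 + γ - 1 / (1 - Real.sqrt (2 * γ)))
    (hu : 0 < u) (hv₁ : 0 < v₁) (hv₂ : 0 < v₂)
    (hmin : (1 - Real.sqrt (2 * γ)) * max u v₁ < min u v₁)
    (hv2 : v₂ ≤ (1 - Real.sqrt (2 * γ)) * v₁)
    (hv1 : v₁ ≤ (2 + γ) * u) :
    2 * γ * u * v₁ ≤ (v₁ - v₂) * ((2 + γ) * u - v₁) := by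
  set s := Real.sqrt (2 * γ) with hs
  have hs0 : 0 ≤ s := Real.sqrt_nonneg _
  have hs2 : s ^ 2 = 2 * γ := Real.sq_sqrt (by linarith)
  have hsqrt2 : Real.sqrt 2 < 3 / 2 := by
    nlinarith [Real.sq_sqrt (show (0:ℝ) ≤ 2 by norm_num), Real.sqrt_nonneg 2]
  have hs1 : s < 1 := by nlinarith
  -- from hmin: (1-s) v₁ < u
  have hmax : v₁ ≤ max u v₁ := le_max_right _ _
  have hminle : min u v₁ ≤ u := min_le_left _ _
  have huv : (1 - s) * v₁ < u := by
    have : (1 - s) * v₁ ≤ (1 - s) * max u v₁ := by nlinarith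
    linarith
  -- from hcond: (2+γ)(1-s) ≥ 1 + s(1-s)
  have hcond' : 1 + s * (1 - s) ≤ (2 + γ) * (1 - s) := by
    have h1s : (0:ℝ) < 1 - s := by linarith
    have h := mul_le_mul_of_nonneg_right hcond h1s.le
    rw [sub_mul, div_mul_cancel₀ _ (ne_of_gt h1s)] at h
    nlinarith
  -- key bound: s*u ≤ (2+γ)*u - v₁
  have hkey : s * u ≤ (2 + γ) * u - v₁ := by
    have h1s : (0:ℝ) < 1 - s := by linarith
    have h2 : (1 + s * (1 - s)) * u ≤ (2 + γ) * (1 - s) * u :=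
      mul_le_mul_of_nonneg_right hcond' hu.le
    nlinarith
  have hkey2 : s * v₁ ≤ v₁ - v₂ := by nlinarith
  have hprod := mul_le_mul hkey2 hkey (by positivity) (by nlinarith)
  have h3 : s ^ 2 * (u * v₁) = 2 * γ * (u * v₁) := by rw [hs2]
  nlinarith [hprod, h3]
end

section
/- Let u, v₁ > 0 be reals with v₁ ≤ u, let S be a finite multiset of positive reals each at most v₁, with sum s := v₁ + ∑S, and suppose 2v₁ ≥ s. Then u² − ∑_{x ∈ S} x² − (2u − s)·v₁ ≥ (u − v₁)² + (2v₁ − s)·(s − v₁) ≥ 0. In particular, if additionally s ≤ (1+β)v₁ for some β ∈ (0,1), then u² − ∑_{x∈S} x² − (2u − s)·v₁ ≥ (1−β)·v₁·(s − v₁). -/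
lemma sum_sq_le_sq_sum (S : Multiset ℝ) (h : ∀ x ∈ S, 0 ≤ x) :
    (S.map (fun x => x^2)).sum ≤ S.sum ^ 2 := by
  induction S using Multiset.induction with
  | empty => simp
  | cons a T ih =>
    have ha : 0 ≤ a := h a (Multiset.mem_cons_self a T)
    have hT : ∀ x ∈ T, 0 ≤ x := fun x hx => h x (Multiset.mem_cons_of_mem hx)
    have hTs : 0 ≤ T.sum := Multiset.sum_nonneg hT
    have := ih hT
    simp only [Multiset.map_cons, Multiset.sum_cons]
    nlinarith [mul_nonneg ha hTs]

theorem single_vertex_contribution (u v₁ : ℝ) (S : Multiset ℝ) (s : ℝ)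
    (hu : 0 < u) (hv₁ : 0 < v₁) (hv₁u : v₁ ≤ u)
    (hS : ∀ x ∈ S, 0 < x ∧ x ≤ v₁)
    (hs : s = v₁ + S.sum) (h2v : s ≤ 2 * v₁) :
    ((u - v₁)^2 + (2 * v₁ - s) * (s - v₁) ≤
        u^2 - (S.map (fun x => x^2)).sum - (2 * u - s) * v₁) ∧
    (0 ≤ (u - v₁)^2 + (2 * v₁ - s) * (s - v₁)) ∧
    (∀ β : ℝ, 0 < β → β < 1 → s ≤ (1 + β) * v₁ →
      (1 - β) * v₁ * (s - v₁) ≤ u^2 - (S.map (fun x => x^2)).sum - (2 * u - s) * v₁) := by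
  have hSnn : ∀ x ∈ S, 0 ≤ x := fun x hx => (hS x hx).1.le
  have hsum : 0 ≤ S.sum := Multiset.sum_nonneg hSnn
  have hsq : (S.map (fun x => x^2)).sum ≤ S.sum ^ 2 := sum_sq_le_sq_sum S hSnn
  have hsv : s - v₁ = S.sum := by rw [hs]; ring
  have h1 : (u - v₁)^2 + (2 * v₁ - s) * (s - v₁) ≤
      u^2 - (S.map (fun x => x^2)).sum - (2 * u - s) * v₁ := by
    nlinarith
  refine ⟨h1, by nlinarith, ?_⟩
  intro β hβ0 hβ1 hβs
  have h2 : (1 - β) * v₁ * (s - v₁) ≤ (u - v₁)^2 + (2 * v₁ - s) * (s - v₁) := by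
    nlinarith
  linarith
end

section
/- Let 0 < ε < 1, let α ≤ 0 be real, and let d ≥ 4. Consider a cycle C₂ₙ on 2n vertices whose weights alternate between c := 2/(d−1−ε) ∈ (0,1) and 1. Let A be the set of the n vertices of weight c and A* the set of the n vertices of weight 1. Then A is an independent set maximizing ∑_{v∈S} w(v)^α over all independent sets S (so no local improvement of w^α(A) exists), while w(A*)/w(A) = (d−1−ε)/2. -/
/-!
Pair the vertices of the cycle into the perfect matching `{2k, 2k + 1}`. An independent set
meets every matching edge at most once, and since `c < 1` and `α ≤ 0` we have `c ^ α ≥ 1 = 1 ^ α`,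
so on each matching edge the even endpoint carries the larger `w ^ α`-weight. Hence the set `A`
of even vertices maximizes `w ^ α`. Both `A` and `A*` have `n` elements, so
`w(A*) / w(A) = n / (n c) = 1 / c`.
-/

open Finset

theorem SimpleGraph.IsIndepSet.sum_le_sum_of_adj_fibers {V M : Type*} [DecidableEq V]
    [AddCommMonoid M] [PartialOrder M] [IsOrderedAddMonoid M]
    {G : SimpleGraph V} {S A : Finset V} (hS : G.IsIndepSet (S : Set V)) (π : V → V)
    (hπA : ∀ v, π v ∈ A) (hπ : ∀ u v, π u = π v → u ≠ v → G.Adj u v)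
    {f : V → M} (hf : ∀ v, f v ≤ f (π v)) (hA : ∀ v ∈ A, 0 ≤ f v) :
    ∑ v ∈ S, f v ≤ ∑ v ∈ A, f v := by
  have hinj : Set.InjOn π S := fun u hu v hv huv =>
    by_contra fun hne => hS hu hv hne (hπ u v huv hne)
  calc ∑ v ∈ S, f v ≤ ∑ v ∈ S, f (π v) := sum_le_sum fun v _ => hf v
    _ = ∑ v ∈ S.image π, f v := (sum_image hinj).symm
    _ ≤ ∑ v ∈ A, f v :=
      sum_le_sum_of_subset_of_nonneg (image_subset_iff.2 fun v _ => hπA v)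
        fun v hv _ => hA v hv

def evenCycle (n : ℕ) : SimpleGraph (Fin (2 * n)) :=
  SimpleGraph.fromRel fun a b => (a.val + 1) % (2 * n) = b.val

namespace evenCycle

variable {n : ℕ}

theorem even_iff_not_even_of_adj {x y : Fin (2 * n)} (h : (evenCycle n).Adj x y) :
    Even x.val ↔ ¬ Even y.val := by
  have parity (a b : Fin (2 * n)) (hab : (a.val + 1) % (2 * n) = b.val) :
      a.val % 2 ≠ b.val % 2 := by
    have := Nat.mod_mod_of_dvd (a.val + 1) (dvd_mul_right 2 n)
    omega
  simp only [Nat.even_iff]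
  rcases (SimpleGraph.fromRel_adj _ _ _).1 h with ⟨-, hxy | hyx⟩
  · have := parity x y hxy; omega
  · have := parity y x hyx; omega

theorem not_adj_of_even {x y : Fin (2 * n)} (hx : Even x.val) (hy : Even y.val) :
    ¬ (evenCycle n).Adj x y :=
  fun h => (even_iff_not_even_of_adj h).1 hx hy

/-- Encodes the perfect matching `{2k, 2k + 1}`: each vertex goes to the even endpoint of its
matching edge. -/
def evenPartner (v : Fin (2 * n)) : Fin (2 * n) := ⟨2 * (v.val / 2), by omega⟩

theorem even_evenPartner (v : Fin (2 * n)) : Even (evenPartner v).val := even_two_mul _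

theorem adj_of_evenPartner_eq {u v : Fin (2 * n)} (h : evenPartner u = evenPartner v)
    (hne : u ≠ v) : (evenCycle n).Adj u v := by
  have huv : u.val / 2 = v.val / 2 := by simpa [evenPartner, Fin.ext_iff] using h
  have hne' : u.val ≠ v.val := Fin.val_ne_of_ne hne
  rw [evenCycle, SimpleGraph.fromRel_adj]
  refine ⟨hne, ?_⟩
  rcases Nat.lt_or_gt_of_ne hne' with hlt | hgt
  · left; rw [Nat.mod_eq_of_lt (by omega)]; omega
  · right; rw [Nat.mod_eq_of_lt (by omega)]; omega

theorem card_filter_not_even :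
    #{v : Fin (2 * n) | ¬ Even v.val} = #{v : Fin (2 * n) | Even v.val} := by
  refine card_bij' (fun v _ => ⟨v.val - 1, by omega⟩)
    (fun v hv => ⟨v.val + 1, by simp_all [Nat.even_iff]; omega⟩) ?_ ?_ ?_ ?_ <;>
    simp_all [Nat.even_iff, Fin.ext_iff] <;> omega

end evenCycle

open evenCycle

theorem alternating_cycle_lower_bound_general (n d : ℕ) (hn : 0 < n) (hd : 4 ≤ d)
    (α ε : ℝ) (hα : α ≤ 0) (hε1 : ε < 1) :
    let G : SimpleGraph (Fin (2 * n)) :=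
      SimpleGraph.fromRel (fun a b => (a.val + 1) % (2 * n) = b.val)
    let c : ℝ := 2 / ((d : ℝ) - 1 - ε)
    let w : Fin (2 * n) → ℝ := fun v => if Even v.val then c else 1
    let A : Finset (Fin (2 * n)) := Finset.univ.filter (fun v => Even v.val)
    let Astar : Finset (Fin (2 * n)) := Finset.univ.filter (fun v => ¬ Even v.val)
    (∀ x ∈ A, ∀ y ∈ A, ¬ G.Adj x y) ∧
    (∀ S : Finset (Fin (2 * n)), (∀ x ∈ S, ∀ y ∈ S, ¬ G.Adj x y) →
      ∑ v ∈ S, (w v) ^ α ≤ ∑ v ∈ A, (w v) ^ α) ∧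
    (∑ v ∈ Astar, w v) / (∑ v ∈ A, w v) = ((d : ℝ) - 1 - ε) / 2 := by
  intro G c w A Astar
  have hd' : (4 : ℝ) ≤ d := by exact_mod_cast hd
  have hc0 : 0 < c := div_pos two_pos (by linarith)
  have hc1 : c < 1 := (div_lt_one (by linarith)).2 (by linarith)
  have hA : ∀ {v}, v ∈ A ↔ Even v.val := by simp [A]
  refine ⟨fun x hx y hy => not_adj_of_even (hA.1 hx) (hA.1 hy), fun S hS => ?_, ?_⟩
  · refine SimpleGraph.IsIndepSet.sum_le_sum_of_adj_fibers (G := evenCycle n)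
      (fun u hu v hv _ => hS u hu v hv) evenPartner (fun v => hA.2 (even_evenPartner v))
      (fun _ _ => adj_of_evenPartner_eq) (fun v => ?_)
      (fun v _ => Real.rpow_nonneg (by positivity) α)
    by_cases hv : Even v.val
    · simp [w, hv, even_evenPartner]
    · simpa [w, hv, even_evenPartner] using
        Real.one_le_rpow_of_pos_of_le_one_of_nonpos hc0 hc1.le hα
  · have hAstar : ∑ v ∈ Astar, w v = #A := by
      rw [sum_congr rfl fun v hv => if_neg (mem_filter.1 hv).2, sum_const, nsmul_one]
      exact congrArg Nat.cast card_filter_not_even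
    have hAw : ∑ v ∈ A, w v = #A * c := by
      rw [sum_congr rfl fun v hv => if_pos (hA.1 hv), sum_const, nsmul_eq_mul]
    have hAcard : (#A : ℝ) ≠ 0 := by
      exact_mod_cast (card_pos.2 ⟨⟨0, by omega⟩, hA.2 ⟨0, rfl⟩⟩).ne'
    rw [hAstar, hAw, div_mul_cancel_left₀ hAcard, inv_div]

theorem alternating_cycle_lower_bound (n d : ℕ) (hn : 0 < n) (hd : 4 ≤ d)
    (α ε : ℝ) (hα : α ≤ 0) (hε0 : 0 < ε) (hε1 : ε < 1) :
    let G : SimpleGraph (Fin (2 * n)) :=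
      SimpleGraph.fromRel (fun a b => (a.val + 1) % (2 * n) = b.val)
    let c : ℝ := 2 / ((d : ℝ) - 1 - ε)
    let w : Fin (2 * n) → ℝ := fun v => if Even v.val then c else 1
    let A : Finset (Fin (2 * n)) := Finset.univ.filter (fun v => Even v.val)
    let Astar : Finset (Fin (2 * n)) := Finset.univ.filter (fun v => ¬ Even v.val)
    (∀ x ∈ A, ∀ y ∈ A, ¬ G.Adj x y) ∧
    (∀ S : Finset (Fin (2 * n)), (∀ x ∈ S, ∀ y ∈ S, ¬ G.Adj x y) →
      ∑ v ∈ S, (w v) ^ α ≤ ∑ v ∈ A, (w v) ^ α) ∧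
    (∑ v ∈ Astar, w v) / (∑ v ∈ A, w v) = ((d : ℝ) - 1 - ε) / 2 :=
  alternating_cycle_lower_bound_general n d hn hd α ε hα hε1
end
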